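/- arXiv:0712.1875 — 4 statements merged into one kernel-verified Lean document; each statement's English description precedes it below -/
import Mathlib

section
/- There exist a minimal integer n ≥ 0 and polynomials p, q_0, …, q_n ∈ ℂ[t] with q_n ≠ 0 such that the family {p, q_0, …, q_n} is coprime (no nonconstant polynomial divides all of them) and ∑_{ι=0}^{n} q_ι(t)·x^{(ι)}(t) = p(t) for all t ∈ ℝ. Moreover this minimal equation is unique up to a nonzero multiplicative constant: if p', q'_0, …, q'_n ∈ ℂ[t] is another coprime family with q'_n ≠ 0 satisfying ∑_{ι=0}^{n} q'_ι(t)·x^{(ι)}(t) = p'(t) for all t ∈ ℝ, then there is a nonzero constant c ∈ ℂ with p' = c·p and q'_ι = c·q_ι for all ι. -/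
/-!
Take the least order `n` of an equation with coprime coefficients. Such equations exist: truncate
the given homogeneous equation at its top nonzero coefficient and divide all coefficients by
their gcd `g`, which is legitimate because the two sides are continuous and `g` vanishes at only
finitely many real points. If `(p, q)` and `(p', q')` are coprime equations of order `n`, the
combination `q'ₙ • (p, q) - qₙ • (p', q')` is an equation with vanishing top coefficient; if any
coefficient survived, the same truncation and division would give a coprime equation of order
`< n`. So all its coefficients vanish, and then so does its right-hand side. The two coprime
families are thus proportional over `ℂ[X]`, and coprimality forces the factor to be a unit, a
nonzero constant.
-/

open Polynomial
open scoped ContDiff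

theorem Finset.exists_unit_mul_of_mul_eq_mul {α ι : Type*} [CommMonoidWithZero α]
    [NormalizedGCDMonoid α] {s : Finset ι} {F G : ι → α} {a b : α} (ha : a ≠ 0)
    (hF : IsUnit (s.gcd F)) (hG : IsUnit (s.gcd G)) (h : ∀ i ∈ s, a * G i = b * F i) :
    ∃ u : αˣ, ∀ i ∈ s, G i = u * F i := by
  have hab : a ∣ b := by
    have : a ∣ s.gcd fun i ↦ b * F i :=
      Finset.dvd_gcd fun i hi ↦ ⟨G i, (h i hi).symm⟩
    exact hF.dvd_mul_right.mp ((Finset.gcd_mul_left' s F b).dvd_iff_dvd_right.mp this)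
  have hba : b ∣ a := by
    have : b ∣ s.gcd fun i ↦ a * G i :=
      Finset.dvd_gcd fun i hi ↦ ⟨F i, h i hi⟩
    exact hG.dvd_mul_right.mp ((Finset.gcd_mul_left' s G a).dvd_iff_dvd_right.mp this)
  obtain ⟨u, rfl⟩ := associated_of_dvd_dvd hab hba
  exact ⟨u, fun i hi ↦ mul_left_cancel₀ ha (by rw [h i hi, mul_assoc])⟩

theorem Fin.init_ne_zero_of_last_eq_zero {M : Type*} [Zero M] {n : ℕ} {q : Fin (n + 1) → M}
    (hq : q ≠ 0) (hlast : q (Fin.last n) = 0) : Fin.init q ≠ 0 := fun h0 ↦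
  hq (funext (Fin.lastCases hlast fun ι ↦ congrFun h0 ι))

namespace Polynomial

variable {K ι : Type*} [Field K] [DecidableEq K]

theorem isUnit_finset_gcd_iff (s : Finset ι) (F : ι → K[X]) :
    IsUnit (s.gcd F) ↔ ¬ ∃ d : K[X], 0 < d.natDegree ∧ ∀ i ∈ s, d ∣ F i := by
  constructor
  · rintro hunit ⟨d, hd, hdvd⟩
    have : IsUnit d := isUnit_of_dvd_unit (Finset.dvd_gcd hdvd) hunit
    exact hd.ne' (natDegree_eq_zero_of_isUnit this)
  · intro hcop
    by_cases hzero : s.gcd F = 0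
    · have hX : ∀ i ∈ s, X ∣ F i := fun i hi ↦ by
        rw [Finset.gcd_eq_zero_iff.mp hzero i hi]; exact dvd_zero X
      exact (hcop ⟨X, by simp, hX⟩).elim
    · have hdeg : (s.gcd F).natDegree = 0 := by
        by_contra hne
        exact hcop ⟨s.gcd F, Nat.pos_of_ne_zero hne, fun i hi ↦ Finset.gcd_dvd hi⟩
      exact isUnit_iff_degree_eq_zero.mpr
        ((degree_eq_iff_natDegree_eq hzero).mpr hdeg)

theorem isUnit_gcd_option_elim_iff [Fintype ι] (p : K[X]) (q : ι → K[X]) :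
    IsUnit (Finset.univ.gcd fun o : Option ι ↦ o.elim p q) ↔
      ¬ ∃ d : K[X], 0 < d.natDegree ∧ d ∣ p ∧ ∀ i, d ∣ q i := by
  simp [isUnit_finset_gcd_iff, Option.forall]

theorem eq_zero_of_forall_eval_ofReal_eq_zero {P : ℂ[X]} (h : ∀ t : ℝ, P.eval (t : ℂ) = 0) :
    P = 0 :=
  P.eq_zero_of_infinite_isRoot <|
    Set.infinite_of_injective_forall_mem Complex.ofReal_injective h

end Polynomial

theorem eq_zero_of_forall_eval_ofReal_mul_eq_zero {d : ℂ[X]} (hd : d ≠ 0) {f : ℝ → ℂ}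
    (hf : Continuous f) (h : ∀ t : ℝ, d.eval (t : ℂ) * f t = 0) : f = 0 := by
  have hroots : {t : ℝ | d.eval (t : ℂ) = 0}.Finite :=
    (finite_setOfPred_isRoot hd).preimage Complex.ofReal_injective.injOn
  refine hf.ext_on (Set.Countable.dense_compl ℝ hroots.countable) continuous_const ?_
  intro t ht
  exact (mul_eq_zero.mp (h t)).resolve_left ht

def SatisfiesPolyODE (x : ℝ → ℂ) {m : ℕ} (p : ℂ[X]) (q : Fin (m + 1) → ℂ[X]) : Prop :=
  ∀ t : ℝ, ∑ ι, (q ι).eval (t : ℂ) * iteratedDeriv (ι : ℕ) x t = p.eval (t : ℂ)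

def HasCoprimePolyODE (x : ℝ → ℂ) (m : ℕ) : Prop :=
  ∃ (p : ℂ[X]) (q : Fin (m + 1) → ℂ[X]), q (Fin.last m) ≠ 0 ∧
    (¬ ∃ d : ℂ[X], 0 < d.natDegree ∧ d ∣ p ∧ ∀ ι, d ∣ q ι) ∧
    SatisfiesPolyODE x p q

namespace SatisfiesPolyODE

variable {x : ℝ → ℂ} {m : ℕ} {p p' : ℂ[X]} {q q' : Fin (m + 1) → ℂ[X]}

theorem sub (h : SatisfiesPolyODE x p q) (h' : SatisfiesPolyODE x p' q') (a b : ℂ[X]) :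
    SatisfiesPolyODE x (a * p - b * p') fun ι ↦ a * q ι - b * q' ι := by
  intro t
  simp only [eval_sub, eval_mul, sub_mul, mul_assoc, Finset.sum_sub_distrib]
  rw [← Finset.mul_sum, ← Finset.mul_sum, h t, h' t]

theorem of_mul (hx : ContDiff ℝ ∞ x) {d : ℂ[X]} (hd : d ≠ 0)
    (h : SatisfiesPolyODE x (d * p) fun ι ↦ d * q ι) : SatisfiesPolyODE x p q := by
  have hcont : Continuous fun t : ℝ ↦
      ∑ ι : Fin (m + 1), (q ι).eval (t : ℂ) * iteratedDeriv ι x t - p.eval (t : ℂ) := by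
    have hderiv := fun k : ℕ ↦ hx.continuous_iteratedDeriv k (mod_cast le_top)
    fun_prop
  have hzero := eq_zero_of_forall_eval_ofReal_mul_eq_zero hd hcont fun t ↦ by
    have ht := h t
    simp only [eval_mul, mul_assoc, ← Finset.mul_sum] at ht
    rw [mul_sub, ht, sub_self]
  exact fun t ↦ sub_eq_zero.mp (congrFun hzero t)

theorem init {q : Fin (m + 2) → ℂ[X]} (h : SatisfiesPolyODE x p q)
    (hlast : q (Fin.last (m + 1)) = 0) : SatisfiesPolyODE x p (Fin.init q) := by
  intro t
  simpa [Fin.init, Fin.sum_univ_castSucc (n := m + 1), hlast] using h t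

theorem exists_order_le (h : SatisfiesPolyODE x p q) (hq : q ≠ 0) :
    ∃ k ≤ m, ∃ q' : Fin (k + 1) → ℂ[X], q' (Fin.last k) ≠ 0 ∧
      SatisfiesPolyODE x p q' := by
  induction m with
  | zero =>
    obtain ⟨ι, hι⟩ := Function.ne_iff.mp hq
    exact ⟨0, le_rfl, q, by rwa [Fin.fin_one_eq_zero ι] at hι, h⟩
  | succ m ih =>
    by_cases hlast : q (Fin.last (m + 1)) = 0
    · obtain ⟨k, hk, q', hq', h'⟩ :=
        ih (h.init hlast) (Fin.init_ne_zero_of_last_eq_zero hq hlast)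
      exact ⟨k, hk.trans m.le_succ, q', hq', h'⟩
    · exact ⟨m + 1, le_rfl, q, hlast, h⟩

theorem exists_order_lt (h : SatisfiesPolyODE x p q) (hq : q ≠ 0)
    (hlast : q (Fin.last m) = 0) :
    ∃ k < m, ∃ q' : Fin (k + 1) → ℂ[X], q' (Fin.last k) ≠ 0 ∧
      SatisfiesPolyODE x p q' := by
  cases m with
  | zero => exact (hq (funext fun ι ↦ by rwa [Fin.fin_one_eq_zero ι])).elim
  | succ m =>
    obtain ⟨k, hk, h'⟩ :=
      (h.init hlast).exists_order_le (Fin.init_ne_zero_of_last_eq_zero hq hlast)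
    exact ⟨k, Nat.lt_succ_of_le hk, h'⟩

theorem hasCoprimePolyODE (hx : ContDiff ℝ ∞ x) (h : SatisfiesPolyODE x p q)
    (hq : q (Fin.last m) ≠ 0) : HasCoprimePolyODE x m := by
  obtain ⟨g, hFg, hg⟩ :=
    Finset.extract_gcd (fun o : Option (Fin (m + 1)) ↦ o.elim p q) Finset.univ_nonempty
  set G := Finset.univ.gcd fun o : Option (Fin (m + 1)) ↦ o.elim p q
  have hp : p = G * g none := hFg none (Finset.mem_univ _)
  have hq_eq : q = fun ι ↦ G * g (some ι) := funext fun ι ↦ hFg (some ι) (Finset.mem_univ _)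
  have hG : G ≠ 0 := fun h0 ↦ hq (by simp [hq_eq, h0])
  refine ⟨g none, fun ι ↦ g (some ι), fun h0 ↦ hq (by simp [hq_eq, h0]), ?_, ?_⟩
  · rw [← isUnit_gcd_option_elim_iff]
    convert isUnit_one (M := ℂ[X])
    convert hg with o
    cases o <;> rfl
  · rw [hp, hq_eq] at h
    exact h.of_mul hx hG

theorem eq_C_mul_of_minimal (hx : ContDiff ℝ ∞ x) (hmin : ∀ k < m, ¬ HasCoprimePolyODE x k)
    (hq : q (Fin.last m) ≠ 0)
    (hcop : ¬ ∃ d : ℂ[X], 0 < d.natDegree ∧ d ∣ p ∧ ∀ ι, d ∣ q ι)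
    (h : SatisfiesPolyODE x p q)
    (hcop' : ¬ ∃ d : ℂ[X], 0 < d.natDegree ∧ d ∣ p' ∧ ∀ ι, d ∣ q' ι)
    (h' : SatisfiesPolyODE x p' q') :
    ∃ c : ℂ, c ≠ 0 ∧ p' = C c * p ∧ ∀ ι, q' ι = C c * q ι := by
  set a := q (Fin.last m)
  set b := q' (Fin.last m)
  have hdiff := h.sub h' b a
  have hr : (fun ι ↦ b * q ι - a * q' ι) = 0 := by
    by_contra hne
    obtain ⟨k, hk, r, hr, hkr⟩ :=
      hdiff.exists_order_lt hne (by simp only [a, b, mul_comm, sub_self])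
    exact hmin k hk (hkr.hasCoprimePolyODE hx hr)
  have hs : b * p - a * p' = 0 := eq_zero_of_forall_eval_ofReal_eq_zero fun t ↦ by
    rw [← hdiff t, hr]
    simp
  obtain ⟨u, hu⟩ := Finset.exists_unit_mul_of_mul_eq_mul (s := Finset.univ)
    (F := fun o : Option (Fin (m + 1)) ↦ o.elim p q) (G := fun o ↦ o.elim p' q') hq
    ((isUnit_gcd_option_elim_iff p q).mpr hcop) ((isUnit_gcd_option_elim_iff p' q').mpr hcop')
    (by
      rintro (_ | ι) -
      · exact (sub_eq_zero.mp hs).symm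
      · exact (sub_eq_zero.mp (congrFun hr ι)).symm)
  obtain ⟨c, hc, hcu⟩ := Polynomial.isUnit_iff.mp u.isUnit
  refine ⟨c, hc.ne_zero, ?_, fun ι ↦ ?_⟩
  · rw [hcu]; exact hu none (Finset.mem_univ _)
  · rw [hcu]; exact hu (some ι) (Finset.mem_univ _)

end SatisfiesPolyODE

theorem minimal_equation_exists_unique_general
    (x : ℝ → ℂ) (hx : AnalyticOnNhd ℝ x Set.univ)
    (hode : ∃ (m : ℕ) (a : Fin (m + 1) → ℂ[X]), (∃ ν, a ν ≠ 0) ∧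
      ∀ t : ℝ, ∑ ν, (a ν).eval (t : ℂ) * iteratedDeriv (ν : ℕ) x t = 0) :
    ∃ n : ℕ,
      -- minimality of n
      (∀ m : ℕ, m < n →
        ¬ ∃ (p : ℂ[X]) (q : Fin (m + 1) → ℂ[X]),
            q (Fin.last m) ≠ 0 ∧
            (¬ ∃ d : ℂ[X], 0 < d.natDegree ∧ d ∣ p ∧ ∀ ι, d ∣ q ι) ∧
            (∀ t : ℝ, ∑ ι, (q ι).eval (t : ℂ) * iteratedDeriv (ι : ℕ) x t
              = p.eval (t : ℂ))) ∧
      -- existence of a coprime equation of order n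
      ∃ (p : ℂ[X]) (q : Fin (n + 1) → ℂ[X]),
        q (Fin.last n) ≠ 0 ∧
        (¬ ∃ d : ℂ[X], 0 < d.natDegree ∧ d ∣ p ∧ ∀ ι, d ∣ q ι) ∧
        (∀ t : ℝ, ∑ ι, (q ι).eval (t : ℂ) * iteratedDeriv (ι : ℕ) x t
          = p.eval (t : ℂ)) ∧
        -- uniqueness up to a nonzero multiplicative constant
        (∀ (p' : ℂ[X]) (q' : Fin (n + 1) → ℂ[X]),
          q' (Fin.last n) ≠ 0 →
          (¬ ∃ d : ℂ[X], 0 < d.natDegree ∧ d ∣ p' ∧ ∀ ι, d ∣ q' ι) →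
          (∀ t : ℝ, ∑ ι, (q' ι).eval (t : ℂ) * iteratedDeriv (ι : ℕ) x t
            = p'.eval (t : ℂ)) →
          ∃ c : ℂ, c ≠ 0 ∧ p' = C c * p ∧ ∀ ι, q' ι = C c * q ι) := by
  classical
  have hsmooth : ContDiff ℝ ∞ x := hx.contDiff
  have hex : ∃ m, HasCoprimePolyODE x m := by
    obtain ⟨m, a, ⟨ν, hν⟩, ha⟩ := hode
    have hsol : SatisfiesPolyODE x 0 a := fun t ↦ (ha t).trans eval_zero.symm
    obtain ⟨k, -, q, hq, hk⟩ := hsol.exists_order_le (Function.ne_iff.mpr ⟨ν, hν⟩)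
    exact ⟨k, hk.hasCoprimePolyODE hsmooth hq⟩
  have hmin : ∀ k < Nat.find hex, ¬ HasCoprimePolyODE x k := fun k hk ↦ Nat.find_min hex hk
  obtain ⟨p, q, hq, hcop, hsol⟩ := Nat.find_spec hex
  exact ⟨Nat.find hex, hmin, p, q, hq, hcop, hsol, fun p' q' _ hcop' hsol' ↦
    hsol.eq_C_mul_of_minimal hsmooth hmin hq hcop hcop' hsol'⟩

/-- existence and essential uniqueness of the minimal (possibly
inhomogeneous) linear differential equation with polynomial coefficients
satisfied by a nonzero analytic signal `x`. -/
theorem minimal_equation_exists_unique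
    (x : ℝ → ℂ) (hx : AnalyticOnNhd ℝ x Set.univ) (hx0 : x ≠ 0)
    (hode : ∃ (m : ℕ) (a : Fin (m + 1) → ℂ[X]), (∃ ν, a ν ≠ 0) ∧
      ∀ t : ℝ, ∑ ν, (a ν).eval (t : ℂ) * iteratedDeriv (ν : ℕ) x t = 0) :
    ∃ n : ℕ,
      -- minimality of n
      (∀ m : ℕ, m < n →
        ¬ ∃ (p : ℂ[X]) (q : Fin (m + 1) → ℂ[X]),
            q (Fin.last m) ≠ 0 ∧
            (¬ ∃ d : ℂ[X], 0 < d.natDegree ∧ d ∣ p ∧ ∀ ι, d ∣ q ι) ∧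
            (∀ t : ℝ, ∑ ι, (q ι).eval (t : ℂ) * iteratedDeriv (ι : ℕ) x t
              = p.eval (t : ℂ))) ∧
      -- existence of a coprime equation of order n
      ∃ (p : ℂ[X]) (q : Fin (n + 1) → ℂ[X]),
        q (Fin.last n) ≠ 0 ∧
        (¬ ∃ d : ℂ[X], 0 < d.natDegree ∧ d ∣ p ∧ ∀ ι, d ∣ q ι) ∧
        (∀ t : ℝ, ∑ ι, (q ι).eval (t : ℂ) * iteratedDeriv (ι : ℕ) x t
          = p.eval (t : ℂ)) ∧
        -- uniqueness up to a nonzero multiplicative constant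
        (∀ (p' : ℂ[X]) (q' : Fin (n + 1) → ℂ[X]),
          q' (Fin.last n) ≠ 0 →
          (¬ ∃ d : ℂ[X], 0 < d.natDegree ∧ d ∣ p' ∧ ∀ ι, d ∣ q' ι) →
          (∀ t : ℝ, ∑ ι, (q' ι).eval (t : ℂ) * iteratedDeriv (ι : ℕ) x t
            = p'.eval (t : ℂ)) →
          ∃ c : ℂ, c ≠ 0 ∧ p' = C c * p ∧ ∀ ι, q' ι = C c * q ι) :=
  minimal_equation_exists_unique_general x hx hode
end

section
/- If the functions f_1, …, f_m are linearly independent over ℂ (as elements of the vector space of functions ℝ → ℂ), then their Wronskian is not identically zero: there exists t ∈ ℝ such that the m × m matrix whose (i, j) entry is the i-th derivative f_j^{(i)}(t) (0 ≤ i ≤ m−1, 1 ≤ j ≤ m) has nonzero determinant. -/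
/-!
Induct on `m`, splitting the family into `g` and a last function `h`, with `W(g)(t₀) ≠ 0` by
induction, and suppose the Wronskian `W(g, h)` vanishes identically. Where `W(g) ≠ 0`,
the vanishing of `W(g, h)` makes the last column of its matrix a combination of the others, and
Cramer's rule gives the coefficients: `h⁽ⁱ⁾ = ∑ⱼ cⱼ gⱼ⁽ⁱ⁾` for all `i ≤ m`, with
`cⱼ = W(g with gⱼ replaced by h) / W(g)` analytic. Differentiating the identity for `i < m` and
subtracting the one for `i + 1` leaves `∑ⱼ cⱼ' gⱼ⁽ⁱ⁾ = 0`, so `c' = 0` and the `cⱼ` are constant on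
a ball around `t₀`. By the identity theorem `h = ∑ⱼ cⱼ gⱼ` on all of `ℝ`, contradicting linear
independence.
-/

open Matrix

theorem Matrix.exists_sum_mul_castSucc_eq_last {K : Type*} [Field K] {m : ℕ}
    (N : Matrix (Fin (m + 1)) (Fin (m + 1)) K) (hN : N.det = 0)
    (hM : (N.submatrix Fin.castSucc Fin.castSucc).det ≠ 0) :
    ∃ c : Fin m → K, ∀ i, ∑ j, N i j.castSucc * c j = N i (Fin.last m) := by
  obtain ⟨w, hw0, hw⟩ := exists_mulVec_eq_zero_iff.mpr hN
  have hrow (i) :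
      ∑ j : Fin m, N i j.castSucc * w j.castSucc + N i (Fin.last m) * w (Fin.last m) = 0 := by
    simpa [mulVec, dotProduct, Fin.sum_univ_castSucc] using congrFun hw i
  have hlast : w (Fin.last m) ≠ 0 := by
    intro hlast
    refine hM (exists_mulVec_eq_zero_iff.mp ⟨w ∘ Fin.castSucc, fun h => hw0 ?_, ?_⟩)
    · ext j
      exact Fin.lastCases hlast (congrFun h) j
    · ext i
      simpa [mulVec, dotProduct, hlast] using hrow i.castSucc
  refine ⟨fun j => -(w (Fin.last m))⁻¹ * w j.castSucc, fun i => ?_⟩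
  calc ∑ j : Fin m, N i j.castSucc * (-(w (Fin.last m))⁻¹ * w j.castSucc)
      = -(w (Fin.last m))⁻¹ * ∑ j : Fin m, N i j.castSucc * w j.castSucc := by
        rw [Finset.mul_sum]; exact Finset.sum_congr rfl fun j _ => by ring
    _ = N i (Fin.last m) := by
        rw [eq_neg_of_add_eq_zero_left (hrow i)]; field_simp

section

variable {𝕜 E F : Type*} [NontriviallyNormedField 𝕜] [NormedAddCommGroup E] [NormedSpace 𝕜 E]
  [NormedAddCommGroup F] [NormedSpace 𝕜 F]

theorem AnalyticOnNhd.matrix_det {R : Type*} [NormedCommRing R] [NormedAlgebra 𝕜 R]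
    {n : Type*} [Fintype n] [DecidableEq n] {A : E → Matrix n n R}
    {s : Set E} (hA : ∀ i j, AnalyticOnNhd 𝕜 (fun x => A x i j) s) :
    AnalyticOnNhd 𝕜 (fun x => (A x).det) s := by
  simp only [det_apply']
  exact Finset.analyticOnNhd_fun_sum _ fun σ _ =>
    analyticOnNhd_const.mul (Finset.analyticOnNhd_fun_prod _ fun i _ => hA (σ i) i)

protected theorem AnalyticOnNhd.iteratedDeriv [CompleteSpace F] {f : 𝕜 → F} {s : Set 𝕜}
    (hf : AnalyticOnNhd 𝕜 f s) (n : ℕ) : AnalyticOnNhd 𝕜 (iteratedDeriv n f) s := by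
  simpa only [iteratedDeriv_eq_iterate] using hf.iterated_deriv n

theorem AnalyticOnNhd.hasDerivAt_iteratedDeriv [CompleteSpace F] {f : 𝕜 → F} {s : Set 𝕜}
    (hf : AnalyticOnNhd 𝕜 f s) {t : 𝕜} (ht : t ∈ s) (n : ℕ) :
    HasDerivAt (iteratedDeriv n f) (iteratedDeriv (n + 1) f t) t := by
  rw [iteratedDeriv_succ]
  exact (hf.iteratedDeriv n t ht).differentiableAt.hasDerivAt

end

section Wronskian

variable {𝕜 : Type*} [NontriviallyNormedField 𝕜] {K : Type*} [NontriviallyNormedField K]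
  [NormedAlgebra 𝕜 K] {m : ℕ}

noncomputable def wronskianMatrix (f : Fin m → 𝕜 → K) (t : 𝕜) : Matrix (Fin m) (Fin m) K :=
  of fun i j => iteratedDeriv i (f j) t

noncomputable def wronskian (f : Fin m → 𝕜 → K) (t : 𝕜) : K :=
  (wronskianMatrix f t).det

theorem wronskianMatrix_snoc_submatrix (g : Fin m → 𝕜 → K) (h : 𝕜 → K) (t : 𝕜) :
    (wronskianMatrix (Fin.snoc g h) t).submatrix Fin.castSucc Fin.castSucc =
      wronskianMatrix g t := by
  ext i j
  simp [wronskianMatrix]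

theorem wronskianMatrix_update (g : Fin m → 𝕜 → K) (j : Fin m) (h : 𝕜 → K) (t : 𝕜) :
    wronskianMatrix (Function.update g j h) t =
      (wronskianMatrix g t).updateCol j fun i => iteratedDeriv i h t := by
  ext i k
  rcases eq_or_ne k j with rfl | hk <;> simp [wronskianMatrix, *]

theorem analyticOnNhd_wronskian [CompleteSpace K] {f : Fin m → 𝕜 → K} {s : Set 𝕜}
    (hf : ∀ j, AnalyticOnNhd 𝕜 (f j) s) : AnalyticOnNhd 𝕜 (wronskian f) s :=
  AnalyticOnNhd.matrix_det fun i j => (hf j).iteratedDeriv i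

noncomputable def wronskianCoeff (g : Fin m → 𝕜 → K) (h : 𝕜 → K) (j : Fin m) (t : 𝕜) : K :=
  wronskian (Function.update g j h) t / wronskian g t

theorem wronskianMatrix_mulVec_wronskianCoeff {g : Fin m → 𝕜 → K} {t : 𝕜}
    (hg : wronskian g t ≠ 0) (h : 𝕜 → K) :
    wronskianMatrix g t *ᵥ (fun j => wronskianCoeff g h j t) =
      fun i : Fin m => iteratedDeriv i h t := by
  have hcramer : (fun j => wronskianCoeff g h j t) =
      (wronskian g t)⁻¹ • (wronskianMatrix g t).cramer fun i : Fin m => iteratedDeriv i h t := by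
    ext j
    simp [wronskianCoeff, wronskian, cramer_apply, wronskianMatrix_update, div_eq_inv_mul]
  rw [hcramer, mulVec_smul, mulVec_cramer, smul_smul, ← wronskian, inv_mul_cancel₀ hg, one_smul]

theorem sum_iteratedDeriv_mul_wronskianCoeff {g : Fin m → 𝕜 → K} {h : 𝕜 → K} {t : 𝕜}
    (hg : wronskian g t ≠ 0) (hgh : wronskian (Fin.snoc g h) t = 0) {i : ℕ} (hi : i ≤ m) :
    ∑ j, iteratedDeriv i (g j) t * wronskianCoeff g h j t = iteratedDeriv i h t := by
  obtain ⟨c, hc⟩ := exists_sum_mul_castSucc_eq_last _ hgh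
    (by rwa [wronskianMatrix_snoc_submatrix])
  simp only [wronskianMatrix, of_apply, Fin.snoc_castSucc, Fin.snoc_last] at hc
  have hc_eq : c = fun j => wronskianCoeff g h j t := by
    refine mulVec_injective_iff_isUnit.mpr (isUnit_iff_isUnit_det _ |>.mpr hg.isUnit) ?_
    rw [wronskianMatrix_mulVec_wronskianCoeff hg]
    ext i
    simpa [wronskianMatrix, mulVec, dotProduct] using hc i.castSucc
  simpa [hc_eq] using hc ⟨i, Nat.lt_succ_of_le hi⟩

variable [CompleteSpace K] {g : Fin m → 𝕜 → K} {h : 𝕜 → K} {U : Set 𝕜}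

theorem analyticOnNhd_wronskianCoeff (hg : ∀ j, AnalyticOnNhd 𝕜 (g j) U)
    (hh : AnalyticOnNhd 𝕜 h U) (hW : ∀ t ∈ U, wronskian g t ≠ 0) (j : Fin m) :
    AnalyticOnNhd 𝕜 (wronskianCoeff g h j) U := by
  have hgh (k) : AnalyticOnNhd 𝕜 (Function.update g j h k) U := by
    rcases eq_or_ne k j with rfl | hk <;> simp [*]
  exact (analyticOnNhd_wronskian hgh).div (analyticOnNhd_wronskian hg) hW

theorem deriv_wronskianCoeff_eq_zero (hU : IsOpen U) (hg : ∀ j, AnalyticOnNhd 𝕜 (g j) U)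
    (hh : AnalyticOnNhd 𝕜 h U) (hW : ∀ t ∈ U, wronskian g t ≠ 0)
    (hW' : ∀ t ∈ U, wronskian (Fin.snoc g h) t = 0) {t : 𝕜} (ht : t ∈ U) (j : Fin m) :
    deriv (wronskianCoeff g h j) t = 0 := by
  set c' : Fin m → K := fun j => deriv (wronskianCoeff g h j) t
  suffices wronskianMatrix g t *ᵥ c' = 0 from
    congrFun (eq_zero_of_mulVec_eq_zero (hW t ht) this) j
  ext i
  have hsum : (fun s => ∑ j, iteratedDeriv i (g j) s * wronskianCoeff g h j s) =ᶠ[nhds t]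
      iteratedDeriv i h :=
    Filter.eventually_of_mem (hU.mem_nhds ht) fun s hs =>
      sum_iteratedDeriv_mul_wronskianCoeff (hW s hs) (hW' s hs) i.is_le'
  have hderiv := (HasDerivAt.fun_sum fun j _ => ((hg j).hasDerivAt_iteratedDeriv ht i).mul
    ((analyticOnNhd_wronskianCoeff hg hh hW j t ht).differentiableAt.hasDerivAt)).unique
    ((hh.hasDerivAt_iteratedDeriv ht i).congr_of_eventuallyEq hsum)
  rw [Finset.sum_add_distrib, ← sum_iteratedDeriv_mul_wronskianCoeff (hW t ht) (hW' t ht) i.isLt]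
    at hderiv
  simpa [wronskianMatrix, mulVec, dotProduct] using hderiv

end Wronskian

section

variable {𝕜 : Type*} [RCLike 𝕜] {K : Type*} [NontriviallyNormedField K] [NormedAlgebra 𝕜 K]
  [CompleteSpace K] {m : ℕ} {g : Fin m → 𝕜 → K} {h : 𝕜 → K}

theorem exists_eqOn_sum_mul_of_wronskian_snoc_eq_zero {U : Set 𝕜} (hU : IsOpen U)
    (hU' : IsPreconnected U) (hg : ∀ j, AnalyticOnNhd 𝕜 (g j) U) (hh : AnalyticOnNhd 𝕜 h U)
    (hW : ∀ t ∈ U, wronskian g t ≠ 0) (hW' : ∀ t ∈ U, wronskian (Fin.snoc g h) t = 0) :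
    ∃ c : Fin m → K, Set.EqOn h (fun s => ∑ j, g j s * c j) U := by
  have hconst (j) : ∃ a, ∀ s ∈ U, wronskianCoeff g h j s = a :=
    hU.exists_is_const_of_deriv_eq_zero hU'
      (fun s hs => (analyticOnNhd_wronskianCoeff hg hh hW j s hs).differentiableWithinAt)
      fun s hs => deriv_wronskianCoeff_eq_zero hU hg hh hW hW' hs j
  choose c hc using hconst
  refine ⟨c, fun s hs => ?_⟩
  simpa [hc _ s hs] using
    (sum_iteratedDeriv_mul_wronskianCoeff (hW s hs) (hW' s hs) (Nat.zero_le m)).symm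

theorem exists_wronskian_snoc_ne_zero (hg : ∀ j, AnalyticOnNhd 𝕜 (g j) Set.univ)
    (hh : AnalyticOnNhd 𝕜 h Set.univ) {t₀ : 𝕜} (ht₀ : wronskian g t₀ ≠ 0)
    (hspan : h ∉ Submodule.span K (Set.range g)) :
    ∃ t, wronskian (Fin.snoc g h) t ≠ 0 := by
  by_contra! hW'
  have hcont : Continuous (wronskian g) :=
    continuousOn_univ.mp (analyticOnNhd_wronskian hg).continuousOn
  obtain ⟨ε, hε, hball⟩ := Metric.isOpen_iff.mp (isOpen_ne_fun hcont continuous_const) t₀ ht₀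
  obtain ⟨c, hc⟩ := exists_eqOn_sum_mul_of_wronskian_snoc_eq_zero Metric.isOpen_ball
    (convex_ball t₀ ε).isPreconnected (fun j => (hg j).mono (Set.subset_univ _))
    (hh.mono (Set.subset_univ _)) hball fun t _ => hW' t
  have hsum : h = ∑ j, c j • g j := by
    refine AnalyticOnNhd.eq_of_eventuallyEq hh ?_
      (Filter.eventually_of_mem (Metric.ball_mem_nhds t₀ hε) fun s hs => ?_)
    · exact Finset.analyticOnNhd_sum _ fun j _ => (hg j).const_smul
    · simpa [mul_comm] using hc hs
  exact hspan (Submodule.mem_span_range_iff_exists_fun K |>.mpr ⟨c, hsum.symm⟩)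

end

/-- the Wronskian of finitely many linearly independent
real-analytic functions is not identically zero. -/
theorem wronskian_of_linearIndependent_analytic_ne_zero
    (m : ℕ) (f : Fin m → ℝ → ℂ)
    (hf : ∀ j, AnalyticOnNhd ℝ (f j) Set.univ)
    (hli : LinearIndependent ℂ f) :
    ∃ t : ℝ,
      (Matrix.of fun i j : Fin m => iteratedDeriv (i : ℕ) (f j) t).det ≠ 0 := by
  induction m with
  | zero => exact ⟨0, by simp⟩
  | succ m ih =>
    rw [← Fin.snoc_init_self f] at hli
    obtain ⟨t₀, ht₀⟩ := ih (Fin.init f) (fun j => hf _) (linearIndependent_finSnoc.mp hli).1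
    have := exists_wronskian_snoc_ne_zero (g := Fin.init f) (fun j => hf _) (hf (Fin.last m))
      ht₀ (linearIndependent_finSnoc.mp hli).2
    rwa [Fin.snoc_init_self] at this
end

section
/- For every k ≥ 1, every real Ω > 0, every A, φ ∈ ℝ and every t ≥ 0, the k-fold iterated integral of the sinusoid w(τ) = A·sin(Ω·τ + φ) satisfies |I_k w (t)| ≤ 2·|A|·t^{k−1} / ((k−1)! · Ω); in particular the contribution of a sinusoidal perturbation of frequency Ω to any iterated-integral estimator is of order A/Ω. -/
/-!
`I₁ w (t) = (A / Ω) (cos φ - cos (Ω t + φ))` is bounded by `C = 2 |A| / Ω` for all `t`.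
Integrating a bound `|I_k w| ≤ C τ^(k-1) / (k-1)!` once more over `[0, t]` gives `C t^k / k!`,
so the estimate propagates to every iterated integral.
-/

/-- The `k`-fold iterated integral from `0`: `iterInt f 1 = ∫₀ᵗ f`,
`iterInt f (k+1) t = ∫₀ᵗ iterInt f k`. (`iterInt f 0 = f`.) -/
noncomputable def iterInt (f : ℝ → ℝ) : ℕ → ℝ → ℝ
  | 0 => f
  | k + 1 => fun t => ∫ τ in (0:ℝ)..t, iterInt f k τ

open Real intervalIntegral

theorem integral_pow_div_factorial (n : ℕ) (t : ℝ) :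
    ∫ τ in (0 : ℝ)..t, τ ^ n / n.factorial = t ^ (n + 1) / (n + 1).factorial := by
  rw [integral_div, integral_pow, Nat.factorial_succ]
  push_cast
  rw [zero_pow n.succ_ne_zero, sub_zero, div_div, mul_comm]

theorem abs_integral_mul_sin_mul_add_le (A Ω φ a b : ℝ) (hΩ : Ω ≠ 0) :
    |∫ τ in a..b, A * sin (Ω * τ + φ)| ≤ 2 * |A| / |Ω| := by
  rw [integral_const_mul, integral_comp_mul_add sin hΩ, integral_sin, smul_eq_mul, abs_mul,
    abs_mul, abs_inv]
  have hcos : |cos (Ω * a + φ) - cos (Ω * b + φ)| ≤ 2 := by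
    calc |cos (Ω * a + φ) - cos (Ω * b + φ)|
        ≤ |cos (Ω * a + φ)| + |cos (Ω * b + φ)| := abs_sub _ _
      _ ≤ 1 + 1 := add_le_add (abs_cos_le_one _) (abs_cos_le_one _)
      _ = 2 := by norm_num
  calc |A| * (|Ω|⁻¹ * |cos (Ω * a + φ) - cos (Ω * b + φ)|)
      ≤ |A| * (|Ω|⁻¹ * 2) := by gcongr
    _ = 2 * |A| / |Ω| := by ring

theorem abs_iterInt_succ_le_of_abs_iterInt_one_le {f : ℝ → ℝ} {C : ℝ}
    (hC : ∀ t, 0 ≤ t → |iterInt f 1 t| ≤ C) (n : ℕ) {t : ℝ} (ht : 0 ≤ t) :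
    |iterInt f (n + 1) t| ≤ C * (t ^ n / n.factorial) := by
  induction n generalizing t with
  | zero => simpa using hC t ht
  | succ n ih =>
    calc |iterInt f (n + 2) t|
        ≤ ∫ τ in (0 : ℝ)..t, C * (τ ^ n / n.factorial) :=
          norm_integral_le_of_norm_le (f := iterInt f (n + 1)) ht
            (Filter.Eventually.of_forall fun τ hτ => ih hτ.1.le)
            (Continuous.intervalIntegrable (by fun_prop) _ _)
      _ = C * (t ^ (n + 1) / (n + 1).factorial) := by
          rw [integral_const_mul, integral_pow_div_factorial]

/-- the contribution of a sinusoidal perturbation of frequency `Ω`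
to the `k`-fold iterated integral is of order `A / Ω`. -/
theorem iterated_integral_sinusoid_bound
    (k : ℕ) (hk : 1 ≤ k) (Ω A φ : ℝ) (hΩ : 0 < Ω) (t : ℝ) (ht : 0 ≤ t) :
    |iterInt (fun τ => A * Real.sin (Ω * τ + φ)) k t| ≤
      2 * |A| * t ^ (k - 1) / ((Nat.factorial (k - 1) : ℝ) * Ω) := by
  obtain ⟨n, rfl⟩ := Nat.exists_eq_add_of_le' hk
  have hfirst : ∀ s, 0 ≤ s →
      |iterInt (fun τ => A * sin (Ω * τ + φ)) 1 s| ≤ 2 * |A| / Ω := fun s _ => by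
    have h := abs_integral_mul_sin_mul_add_le A Ω φ 0 s hΩ.ne'
    rwa [abs_of_pos hΩ] at h
  calc |iterInt (fun τ => A * sin (Ω * τ + φ)) (n + 1) t|
      ≤ 2 * |A| / Ω * (t ^ n / n.factorial) :=
        abs_iterInt_succ_le_of_abs_iterInt_one_le hfirst n ht
    _ = 2 * |A| * t ^ (n + 1 - 1) / ((n + 1 - 1).factorial * Ω) := by
        rw [Nat.add_sub_cancel]; ring
end

section
/- If the hyperreal quotient ofSeq(A)/ofSeq(Ω) is infinitesimal, then for every natural number ν, every φ ∈ ℝ and every standard real t ≥ 0, the hyperreal ofSeq(fun n ↦ ∫_0^t τ^ν · A_n · sin(Ω_n·τ + φ) dτ) is infinitesimal; thus a high-frequency sinusoidal perturbation with infinitesimal amplitude-to-frequency ratio contributes only infinitesimally to the iterated-integral estimates. -/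
/-!
Integrating by parts against `-cos (Ω τ + φ) / Ω` bounds `∫₀ᵗ τ ^ ν sin (Ω τ + φ) dτ`
by `C / |Ω|`, with `C` depending only on `ν` and `t`. Hence the `n`-th term of the
sequence is at most `C · |A n / Ω n|`, and it is infinitesimal together with `ofSeq A / ofSeq Ω`.
-/

open Hyperreal MeasureTheory Set

theorem abs_integral_mul_deriv_le {u u' v v' : ℝ → ℝ} {a b M : ℝ}
    (hu : ∀ x ∈ uIcc a b, HasDerivAt u (u' x) x) (hu' : IntervalIntegrable u' volume a b)
    (hv : ∀ x ∈ uIcc a b, HasDerivAt v (v' x) x) (hv' : IntervalIntegrable v' volume a b)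
    (hvM : ∀ x ∈ uIcc a b, |v x| ≤ M) :
    |∫ x in a..b, u x * v' x| ≤ (|u a| + |u b| + |∫ x in a..b, (|u' x|)|) * M := by
  have hbM : |v b| ≤ M := hvM b right_mem_uIcc
  have haM : |v a| ≤ M := hvM a left_mem_uIcc
  have hM : 0 ≤ M := (abs_nonneg _).trans haM
  have hrest : |∫ x in a..b, u' x * v x| ≤ |∫ x in a..b, (|u' x| * M)| := by
    refine intervalIntegral.norm_integral_le_abs_of_norm_le (f := fun x => u' x * v x) ?_
      (hu'.abs.mul_const M)
    refine ae_restrict_of_forall_mem measurableSet_uIoc fun x hx => ?_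
    rw [Real.norm_eq_abs, abs_mul]
    exact mul_le_mul_of_nonneg_left (hvM x (uIoc_subset_uIcc hx)) (abs_nonneg _)
  rw [intervalIntegral.integral_mul_deriv_eq_deriv_mul hu hv hu' hv']
  rw [intervalIntegral.integral_mul_const, abs_mul, abs_of_nonneg hM] at hrest
  calc |u b * v b - u a * v a - ∫ x in a..b, u' x * v x|
      ≤ |u b| * |v b| + |u a| * |v a| + |∫ x in a..b, u' x * v x| := by
        rw [← abs_mul, ← abs_mul]
        exact (abs_sub _ _).trans (add_le_add_left (abs_sub _ _) _)
    _ ≤ |u b| * M + |u a| * M + |∫ x in a..b, (|u' x|)| * M := by gcongr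
    _ = (|u a| + |u b| + |∫ x in a..b, (|u' x|)|) * M := by ring

theorem abs_integral_mul_sin_le {u u' : ℝ → ℝ} {a b Ω : ℝ}
    (hu : ∀ x ∈ uIcc a b, HasDerivAt u (u' x) x)
    (hu' : IntervalIntegrable u' volume a b) (hΩ : Ω ≠ 0) (φ : ℝ) :
    |∫ x in a..b, u x * Real.sin (Ω * x + φ)| ≤
      (|u a| + |u b| + |∫ x in a..b, (|u' x|)|) / |Ω| := by
  have hv (x : ℝ) :
      HasDerivAt (fun τ => -Real.cos (Ω * τ + φ) / Ω) (Real.sin (Ω * x + φ)) x := by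
    have hlin : HasDerivAt (fun τ => Ω * τ + φ) Ω x := by
      simpa using ((hasDerivAt_id x).const_mul Ω).add_const φ
    refine (hlin.cos.neg.div_const Ω).congr_deriv ?_
    field_simp
  have hvM (x : ℝ) : |-Real.cos (Ω * x + φ) / Ω| ≤ 1 / |Ω| := by
    rw [abs_div, abs_neg]
    gcongr
    exact Real.abs_cos_le_one _
  rw [div_eq_mul_one_div]
  exact abs_integral_mul_deriv_le hu hu' (fun x _ => hv x)
    (by apply Continuous.intervalIntegrable; fun_prop) (fun x _ => hvM x)

theorem Hyperreal.infinitesimal_ofSeq_of_abs_le_mul {f g : ℕ → ℝ} (C : ℝ)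
    (hfg : ∀ n, |f n| ≤ C * |g n|) (hg : Infinitesimal (ofSeq g)) :
    Infinitesimal (ofSeq f) := by
  rw [Infinitesimal, isSt_ofSeq_iff_tendsto] at hg ⊢
  refine squeeze_zero_norm hfg ?_
  simpa using hg.abs.const_mul C

theorem sinusoid_contribution_infinitesimal_general
    (A Ω : ℕ → ℝ) (hΩ : ∀ n, 0 < Ω n)
    (h : Infinitesimal (ofSeq A / ofSeq Ω))
    (ν : ℕ) (φ : ℝ) (t : ℝ) :
    Infinitesimal (ofSeq fun n =>
      ∫ τ in (0:ℝ)..t, τ ^ ν * (A n * Real.sin (Ω n * τ + φ))) := by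
  set C := |(0:ℝ) ^ ν| + |t ^ ν| + |∫ τ in (0:ℝ)..t, (|(ν : ℝ) * τ ^ (ν - 1)|)|
  have hpow' : IntervalIntegrable (fun τ : ℝ => (ν : ℝ) * τ ^ (ν - 1)) volume 0 t :=
    (by fun_prop : Continuous _).intervalIntegrable 0 t
  -- `h` applies as is: `ofSeq A / ofSeq Ω` is definitionally `ofSeq (fun n => A n / Ω n)`.
  refine infinitesimal_ofSeq_of_abs_le_mul (g := fun n => A n / Ω n) C (fun n => ?_) h
  calc |∫ τ in (0:ℝ)..t, τ ^ ν * (A n * Real.sin (Ω n * τ + φ))|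
      = |A n| * |∫ τ in (0:ℝ)..t, τ ^ ν * Real.sin (Ω n * τ + φ)| := by
        rw [← abs_mul, ← intervalIntegral.integral_const_mul]
        congr 2 with τ
        ring
    _ ≤ |A n| * (C / |Ω n|) := by
        gcongr
        exact abs_integral_mul_sin_le (fun x _ => hasDerivAt_pow ν x) hpow' (hΩ n).ne' φ
    _ = C * |A n / Ω n| := by
        rw [abs_div]
        ring

/-- a high-frequency sinusoidal perturbation whose
amplitude-to-frequency ratio is infinitesimal contributes only infinitesimally
to the iterated-integral estimates. -/
theorem sinusoid_contribution_infinitesimal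
    (A Ω : ℕ → ℝ) (hΩ : ∀ n, 0 < Ω n)
    (h : Infinitesimal (ofSeq A / ofSeq Ω))
    (ν : ℕ) (φ : ℝ) (t : ℝ) (ht : 0 ≤ t) :
    Infinitesimal (ofSeq fun n =>
      ∫ τ in (0:ℝ)..t, τ ^ ν * (A n * Real.sin (Ω n * τ + φ))) :=
  sinusoid_contribution_infinitesimal_general A Ω hΩ h ν φ t
end
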